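/- The Vega–Gamma–Delta relationship holds for the Inverse-option Black–Scholes function: for all τ > 0, x, k ∈ ℝ and σ > 0, ∂_σ BS(τ,x,k,σ) / (στ) = ∂²_{xx} BS(τ,x,k,σ) − ∂_x BS(τ,x,k,σ). -/

import Mathlib

open Real MeasureTheory Set Filter

/-- Standard normal CDF `N(z) = (2π)^{-1/2} ∫_{-∞}^z e^{-t²/2} dt`. -/
noncomputable def Ncdf (z : ℝ) : ℝ :=
  (Real.sqrt (2 * Real.pi))⁻¹ * ∫ t in Set.Iic z, Real.exp (-t ^ 2 / 2)

/-- Standard normal density `φ(z) = (2π)^{-1/2} e^{-z²/2}`. -/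
noncomputable def phi (z : ℝ) : ℝ :=
  (Real.sqrt (2 * Real.pi))⁻¹ * Real.exp (-z ^ 2 / 2)

/-- `d₂ = (x-k)/(σ√τ) - σ√τ/2`. -/
noncomputable def d2 (τ x k σ : ℝ) : ℝ :=
  (x - k) / (σ * Real.sqrt τ) - σ * Real.sqrt τ / 2

/-- `d₁ = d₂ - σ√τ`. -/
noncomputable def d1 (τ x k σ : ℝ) : ℝ :=
  d2 τ x k σ - σ * Real.sqrt τ

/-- Black–Scholes price of an Inverse European call:
`BS(τ,x,k,σ) = N(d₂) - e^{σ²τ + k - x} N(d₁)`. -/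
noncomputable def BS (τ x k σ : ℝ) : ℝ :=
  Ncdf (d2 τ x k σ) - Real.exp (σ ^ 2 * τ + k - x) * Ncdf (d1 τ x k σ)

/-- Complementary error function `Erfc(z) = (2/√π) ∫_z^∞ e^{-t²} dt`. -/
noncomputable def Erfc (z : ℝ) : ℝ :=
  2 / Real.sqrt Real.pi * ∫ t in Set.Ioi z, Real.exp (-t ^ 2)

/-- `H(τ,x,k,σ) = ½ (∂³ₓₓₓ BS - ∂²ₓₓ BS)(τ,x,k,σ)`. -/
noncomputable def Hfun (τ x k σ : ℝ) : ℝ :=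
  (1 / 2) * (iteratedDeriv 3 (fun x' => BS τ x' k σ) x
    - iteratedDeriv 2 (fun x' => BS τ x' k σ) x)

/-- `G(τ,x,k,σ) = ∂ₖ H(τ,x,k,σ) - H(τ,x,k,σ)`. -/
noncomputable def Gfun (τ x k σ : ℝ) : ℝ :=
  deriv (fun k' => Hfun τ x k' σ) k - Hfun τ x k σ

lemma gauss_integrable : Integrable (fun t : ℝ => Real.exp (-t ^ 2 / 2)) := by
  have h : (fun t : ℝ => Real.exp (-t ^ 2 / 2)) = fun t => Real.exp (-(1/2 : ℝ) * t ^ 2) := by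
    funext t; ring_nf
  rw [h]; exact integrable_exp_neg_mul_sq (by norm_num)

lemma gauss_continuous : Continuous (fun t : ℝ => Real.exp (-t ^ 2 / 2)) := by continuity

lemma hasDerivAt_Ncdf (z : ℝ) : HasDerivAt Ncdf (phi z) z := by
  have hfun : Ncdf = fun w => (Real.sqrt (2 * Real.pi))⁻¹ *
      ((∫ t in Set.Iic (0:ℝ), Real.exp (-t ^ 2 / 2)) + ∫ t in (0:ℝ)..w, Real.exp (-t ^ 2 / 2)) := by
    funext w
    rw [Ncdf, ← intervalIntegral.integral_Iic_sub_Iic gauss_integrable.integrableOn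
      gauss_integrable.integrableOn]
    ring
  have hd : HasDerivAt (fun w => ∫ t in (0:ℝ)..w, Real.exp (-t ^ 2 / 2))
      (Real.exp (-z ^ 2 / 2)) z :=
    intervalIntegral.integral_hasDerivAt_right gauss_integrable.intervalIntegrable
      (gauss_continuous.stronglyMeasurableAtFilter _ _) gauss_continuous.continuousAt
  rw [hfun]
  simpa [phi] using ((hd.const_add _).const_mul (Real.sqrt (2 * Real.pi))⁻¹)

lemma EPhi (τ x k σ : ℝ) (hτ : 0 < τ) (hσ : 0 < σ) :
    Real.exp (σ ^ 2 * τ + k - x) * phi (d1 τ x k σ) = phi (d2 τ x k σ) := by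
  simp only [phi, d1, d2]
  set st := Real.sqrt τ with hstdef
  have hst : st ^ 2 = τ := Real.sq_sqrt hτ.le
  have hs : σ * st ≠ 0 := by positivity
  rw [mul_comm (Real.exp _), mul_assoc, ← Real.exp_add]
  congr 1
  congr 1
  have hst0 : st ≠ 0 := hstdef ▸ (Real.sqrt_pos.mpr hτ).ne'
  rw [← hst]
  field_simp
  ring

lemma hasDerivAt_BS_x (τ x k σ : ℝ) (hτ : 0 < τ) (hσ : 0 < σ) :
    HasDerivAt (fun x' => BS τ x' k σ)
      (Real.exp (σ ^ 2 * τ + k - x) * Ncdf (d1 τ x k σ)) x := by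
  have hs : σ * Real.sqrt τ ≠ 0 := by positivity
  have hd2 : HasDerivAt (fun x' => d2 τ x' k σ) (1 / (σ * Real.sqrt τ)) x := by
    have := (((hasDerivAt_id x).sub_const k).div_const (σ * Real.sqrt τ)).sub_const
      (σ * Real.sqrt τ / 2)
    simpa [d2] using this
  have hd1 : HasDerivAt (fun x' => d1 τ x' k σ) (1 / (σ * Real.sqrt τ)) x := by
    simpa [d1] using hd2.sub_const (σ * Real.sqrt τ)
  have hN2 := (hasDerivAt_Ncdf (d2 τ x k σ)).comp x hd2
  have hN1 := (hasDerivAt_Ncdf (d1 τ x k σ)).comp x hd1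
  have hE : HasDerivAt (fun x' => Real.exp (σ ^ 2 * τ + k - x'))
      (-Real.exp (σ ^ 2 * τ + k - x)) x := by
    have hi : HasDerivAt (fun x' : ℝ => σ ^ 2 * τ + k - x') (-1) x := by
      simpa using (hasDerivAt_id x).const_sub (σ ^ 2 * τ + k)
    simpa [Function.comp_def] using (Real.hasDerivAt_exp (σ ^ 2 * τ + k - x)).comp x hi
  have h := hN2.sub (hE.mul hN1)
  have hk := EPhi τ x k σ hτ hσ
  refine h.congr_deriv ?_
  simp only [Function.comp_apply]
  rw [← hk]
  ring

lemma deriv_BS_x (τ k σ : ℝ) (hτ : 0 < τ) (hσ : 0 < σ) :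
    deriv (fun x' => BS τ x' k σ)
      = fun x' => Real.exp (σ ^ 2 * τ + k - x') * Ncdf (d1 τ x' k σ) := by
  funext x'
  exact (hasDerivAt_BS_x τ x' k σ hτ hσ).deriv

lemma hasDerivAt_BS_xx (τ x k σ : ℝ) (hτ : 0 < τ) (hσ : 0 < σ) :
    HasDerivAt (fun x' => Real.exp (σ ^ 2 * τ + k - x') * Ncdf (d1 τ x' k σ))
      (-(Real.exp (σ ^ 2 * τ + k - x) * Ncdf (d1 τ x k σ))
        + phi (d2 τ x k σ) / (σ * Real.sqrt τ)) x := by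
  have hs : σ * Real.sqrt τ ≠ 0 := by positivity
  have hd2 : HasDerivAt (fun x' => d2 τ x' k σ) (1 / (σ * Real.sqrt τ)) x := by
    have := (((hasDerivAt_id x).sub_const k).div_const (σ * Real.sqrt τ)).sub_const
      (σ * Real.sqrt τ / 2)
    simpa [d2] using this
  have hd1 : HasDerivAt (fun x' => d1 τ x' k σ) (1 / (σ * Real.sqrt τ)) x := by
    simpa [d1] using hd2.sub_const (σ * Real.sqrt τ)
  have hN1 := (hasDerivAt_Ncdf (d1 τ x k σ)).comp x hd1
  have hE : HasDerivAt (fun x' => Real.exp (σ ^ 2 * τ + k - x'))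
      (-Real.exp (σ ^ 2 * τ + k - x)) x := by
    have hi : HasDerivAt (fun x' : ℝ => σ ^ 2 * τ + k - x') (-1) x := by
      simpa using (hasDerivAt_id x).const_sub (σ ^ 2 * τ + k)
    simpa [Function.comp_def] using (Real.hasDerivAt_exp (σ ^ 2 * τ + k - x)).comp x hi
  have h := hE.mul hN1
  have hk := EPhi τ x k σ hτ hσ
  refine h.congr_deriv ?_
  simp only [Function.comp_apply]
  rw [← hk]
  ring

lemma hasDerivAt_BS_sigma (τ x k σ : ℝ) (hτ : 0 < τ) (hσ : 0 < σ) :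
    HasDerivAt (fun σ' => BS τ x k σ')
      (phi (d2 τ x k σ) * Real.sqrt τ
        - 2 * σ * τ * Real.exp (σ ^ 2 * τ + k - x) * Ncdf (d1 τ x k σ)) σ := by
  have hstp : 0 < Real.sqrt τ := Real.sqrt_pos.mpr hτ
  have hs : σ * Real.sqrt τ ≠ 0 := by positivity
  set D : ℝ := (0 * (σ * Real.sqrt τ) - (x - k) * (1 * Real.sqrt τ)) / (σ * Real.sqrt τ) ^ 2
    - 1 * Real.sqrt τ / 2 with hD
  have hd2 : HasDerivAt (fun σ' => d2 τ x k σ') D σ := by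
    have := ((hasDerivAt_const σ (x - k)).div ((hasDerivAt_id σ).mul_const (Real.sqrt τ)) hs).sub
      (((hasDerivAt_id σ).mul_const (Real.sqrt τ)).div_const 2)
    simpa [d2, hD, Pi.sub_def, Pi.div_def] using this
  have hd1 : HasDerivAt (fun σ' => d1 τ x k σ') (D - 1 * Real.sqrt τ) σ := by
    simpa [d1, Pi.sub_def] using hd2.sub ((hasDerivAt_id σ).mul_const (Real.sqrt τ))
  have hN2 := (hasDerivAt_Ncdf (d2 τ x k σ)).comp σ hd2
  have hN1 := (hasDerivAt_Ncdf (d1 τ x k σ)).comp σ hd1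
  have hE : HasDerivAt (fun σ' => Real.exp (σ' ^ 2 * τ + k - x))
      (2 * σ * τ * Real.exp (σ ^ 2 * τ + k - x)) σ := by
    have hi : HasDerivAt (fun σ' : ℝ => σ' ^ 2 * τ + k - x) (2 * σ * τ) σ := by
      have h0 := (((hasDerivAt_pow 2 σ).mul_const τ).add_const k).sub_const x
      refine h0.congr_deriv ?_
      push_cast
      ring
    simpa [mul_comm, Function.comp_def] using (Real.hasDerivAt_exp (σ ^ 2 * τ + k - x)).comp σ hi
  have h := hN2.sub (hE.mul hN1)
  have hk := EPhi τ x k σ hτ hσ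
  refine h.congr_deriv ?_
  simp only [Function.comp_apply]
  rw [← hk]
  ring

/-- the Vega–Gamma–Delta relationship for the Inverse call. -/
theorem stmt_4 (τ x k σ : ℝ) (hτ : 0 < τ) (hσ : 0 < σ) :
    deriv (fun σ' => BS τ x k σ') σ / (σ * τ)
      = iteratedDeriv 2 (fun x' => BS τ x' k σ) x
        - deriv (fun x' => BS τ x' k σ) x := by
  rw [(hasDerivAt_BS_sigma τ x k σ hτ hσ).deriv, (hasDerivAt_BS_x τ x k σ hτ hσ).deriv,
    show (2 : ℕ) = 1 + 1 from rfl, iteratedDeriv_succ, iteratedDeriv_one,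
    deriv_BS_x τ k σ hτ hσ, (hasDerivAt_BS_xx τ x k σ hτ hσ).deriv]
  set st := Real.sqrt τ with hstdef
  have hstp : 0 < st := Real.sqrt_pos.mpr hτ
  have hmul : τ = st * st := (Real.mul_self_sqrt hτ.le).symm
  rw [hmul]
  have h2 : σ * st ≠ 0 := by positivity
  have h3 : σ * (st * st) ≠ 0 := by positivity
  field_simp
  ring
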